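/- Let G be a finite simple graph with maximum degree Δ(G) = 5, and suppose every proper subgraph H of G satisfies χ_i(H) ≤ 7. If G contains a vertex of degree 3 that is adjacent to one vertex of degree 2 and to two other vertices u and v with d(u) + d(v) ≤ 7, then χ_i(G) ≤ 7. -/

import Mathlib

open SimpleGraph

/-- An injective coloring of `G`: any two distinct vertices with a common neighbor
receive distinct colors. -/
def IsInjColoring {V α : Type*} (G : SimpleGraph V) (c : V → α) : Prop :=
  ∀ ⦃u v : V⦄, u ≠ v → (∃ w, G.Adj u w ∧ G.Adj v w) → c u ≠ c v

/-- The injective chromatic number of `G`: the least `k` such that `G` has an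
injective coloring with `k` colors. -/
noncomputable def injChromNum {V : Type*} (G : SimpleGraph V) : ℕ :=
  sInf {k | ∃ c : V → Fin k, IsInjColoring G c}

/-!
Delete the edge `wz`. By minimality `G - wz` has an injective 7-coloring, and this coloring can
only fail in `G` on pairs whose common neighbor is `w` or `z`, so on pairs containing `z` or `w`.
Recolor `z`, then `w`, greedily. Through its neighbors `w` and `z₁`, the vertex `z` shares a
neighbor with at most `(d(w) - 1) + (d(z₁) - 1) ≤ 2 + 4` other vertices, and `w` with at most
`(d(z) - 1) + (d(u) - 1) + (d(v) - 1) ≤ 1 + 5` others, so a seventh color is always free.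
-/

open Finset

section

variable {V : Type*}

def IsInjColoringOn {α : Type*} (G : SimpleGraph V) (c : V → α) (s : Set V) : Prop :=
  ∀ ⦃u⦄, u ∈ s → ∀ ⦃v⦄, v ∈ s → u ≠ v → (∃ w, G.Adj u w ∧ G.Adj v w) → c u ≠ c v

lemma IsInjColoringOn.isInjColoring {α : Type*} {G : SimpleGraph V} {c : V → α}
    (hc : IsInjColoringOn G c Set.univ) : IsInjColoring G c :=
  fun _ _ huv hw => hc trivial trivial huv hw

lemma IsInjColoring.comp_embedding {W α : Type*} {G : SimpleGraph V} {G' : SimpleGraph W}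
    {c : V → α} (hc : IsInjColoring G c) (f : G' ↪g G) : IsInjColoring G' (c ∘ f) := by
  rintro u v huv ⟨w, hu, hv⟩
  exact hc (f.injective.ne huv) ⟨f w, f.map_rel_iff.2 hu, f.map_rel_iff.2 hv⟩

lemma IsInjColoring.isInjColoringOn_deleteEdges {α : Type*} {G : SimpleGraph V} {c : V → α}
    {a b : V} (hc : IsInjColoring (G.deleteEdges {s(a, b)}) c) :
    IsInjColoringOn G c {a, b}ᶜ := by
  rintro u hu v hv huv ⟨w, hwu, hwv⟩
  simp only [Set.mem_compl_iff, Set.mem_insert_iff, Set.mem_singleton_iff, not_or] at hu hv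
  refine hc huv ⟨w, ?_, ?_⟩ <;> simp_all

lemma exists_injColoring_of_injChromNum_le [Finite V] {G : SimpleGraph V} {k : ℕ}
    (h : injChromNum G ≤ k) : ∃ c : V → Fin k, IsInjColoring G c := by
  have : Fintype V := Fintype.ofFinite V
  have hne : {k | ∃ c : V → Fin k, IsInjColoring G c}.Nonempty :=
    ⟨_, Fintype.equivFin V, fun _ _ huv _ => (Fintype.equivFin V).injective.ne huv⟩
  obtain ⟨c, hc⟩ := Nat.sInf_mem hne
  exact ⟨Fin.castLE h ∘ c, fun u v huv hw => (Fin.castLE_injective h).ne (hc huv hw)⟩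

lemma injChromNum_le_of_isInjColoring {G : SimpleGraph V} {k : ℕ} {c : V → Fin k}
    (hc : IsInjColoring G c) : injChromNum G ≤ k :=
  Nat.sInf_le ⟨c, hc⟩

lemma exists_injColoring_deleteEdges [Finite V] {G : SimpleGraph V} {k : ℕ}
    (hmin : ∀ H : G.Subgraph, H ≠ ⊤ → injChromNum H.coe ≤ k) {a b : V} (hab : G.Adj a b) :
    ∃ c : V → Fin k, IsInjColoring (G.deleteEdges {s(a, b)}) c := by
  set H := (⊤ : G.Subgraph).deleteEdges {s(a, b)}
  have hH : H ≠ ⊤ := fun hH => by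
    simpa [H, hab] using congrArg (fun H : G.Subgraph => H.Adj a b) hH
  obtain ⟨c, hc⟩ := exists_injColoring_of_injChromNum_le (hmin H hH)
  have hHG : H.spanningCoe = G.deleteEdges {s(a, b)} := by
    rw [← Subgraph.deleteEdges_spanningCoe_eq, Subgraph.spanningCoe_top]
  refine ⟨c ∘ fun x => ⟨x, trivial⟩, ?_⟩
  rw [← hHG]
  exact hc.comp_embedding (H.spanningCoeEquivCoeOfSpanning fun _ => trivial).toEmbedding

namespace SimpleGraph

variable (G : SimpleGraph V) [Fintype V] [DecidableEq V] [DecidableRel G.Adj]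

def injNbrFinset (x : V) : Finset V :=
  (G.neighborFinset x).biUnion fun p => (G.neighborFinset p).erase x

variable {G}

lemma mem_injNbrFinset {x y : V} :
    y ∈ G.injNbrFinset x ↔ y ≠ x ∧ ∃ p, G.Adj x p ∧ G.Adj y p := by
  simp [injNbrFinset, adj_comm, and_left_comm]

lemma card_injNbrFinset_le (x : V) :
    #(G.injNbrFinset x) ≤ ∑ p ∈ G.neighborFinset x, (G.degree p - 1) := by
  refine card_biUnion_le.trans (sum_le_sum fun p hp => ?_)
  rw [card_erase_of_mem ((mem_neighborFinset _ _ _).2 ((mem_neighborFinset _ _ _).1 hp).symm),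
    card_neighborFinset_eq_degree]

lemma card_injNbrFinset_le_of_degree_eq_two {z w : V} (hz : G.degree z = 2) (hzw : G.Adj z w) :
    #(G.injNbrFinset z) ≤ G.degree w - 1 + (G.maxDegree - 1) := by
  have hw : w ∈ G.neighborFinset z := (mem_neighborFinset _ _ _).2 hzw
  have hrest : #((G.neighborFinset z).erase w) = 1 := by
    rw [card_erase_of_mem hw, card_neighborFinset_eq_degree, hz]
  calc #(G.injNbrFinset z)
      ≤ ∑ p ∈ G.neighborFinset z, (G.degree p - 1) := card_injNbrFinset_le z
    _ = G.degree w - 1 + ∑ p ∈ (G.neighborFinset z).erase w, (G.degree p - 1) :=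
        (add_sum_erase _ _ hw).symm
    _ ≤ G.degree w - 1 + (G.maxDegree - 1) := by
        gcongr
        refine (sum_le_card_nsmul _ _ (G.maxDegree - 1) fun p _ => ?_).trans (by simp [hrest])
        exact Nat.sub_le_sub_right (G.degree_le_maxDegree p) 1

lemma neighborFinset_eq_of_degree_eq_three {w z u v : V} (hw : G.degree w = 3)
    (hwz : G.Adj w z) (hwu : G.Adj w u) (hwv : G.Adj w v) (hzu : z ≠ u) (hzv : z ≠ v)
    (huv : u ≠ v) : G.neighborFinset w = {z, u, v} := by
  refine (eq_of_subset_of_card_le (fun x hx => ?_) ?_).symm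
  · simp only [mem_insert, mem_singleton] at hx
    rcases hx with rfl | rfl | rfl <;> simpa
  · rw [card_neighborFinset_eq_degree, hw, card_insert_of_notMem (by simp [hzu, hzv]),
      card_pair huv]

lemma card_injNbrFinset_add_three_le_of_degree_eq_three {w z u v : V} (hw : G.degree w = 3)
    (hwz : G.Adj w z) (hwu : G.Adj w u) (hwv : G.Adj w v) (hzu : z ≠ u) (hzv : z ≠ v)
    (huv : u ≠ v) : #(G.injNbrFinset w) + 3 ≤ G.degree z + G.degree u + G.degree v := by
  have hsum := card_injNbrFinset_le (G := G) w
  rw [neighborFinset_eq_of_degree_eq_three hw hwz hwu hwv hzu hzv huv,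
    sum_insert (by simp [hzu, hzv]), sum_pair huv] at hsum
  have := G.degree_pos_iff_exists_adj z |>.2 ⟨w, hwz.symm⟩
  have := G.degree_pos_iff_exists_adj u |>.2 ⟨w, hwu.symm⟩
  have := G.degree_pos_iff_exists_adj v |>.2 ⟨w, hwv.symm⟩
  omega

end SimpleGraph

lemma IsInjColoringOn.exists_update [Fintype V] [DecidableEq V] {G : SimpleGraph V}
    [DecidableRel G.Adj] {k : ℕ} {c : V → Fin k} {s : Set V} (hc : IsInjColoringOn G c s)
    {x : V} (hx : #(G.injNbrFinset x) < k) :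
    ∃ a, IsInjColoringOn G (Function.update c x a) (insert x s) := by
  obtain ⟨a, -, ha⟩ := exists_mem_notMem_of_card_lt_card
    (s := (G.injNbrFinset x).image c) (t := univ) (by simpa using card_image_le.trans_lt hx)
  have hfresh : ∀ y, y ≠ x → (∃ p, G.Adj x p ∧ G.Adj y p) → a ≠ c y := fun y hyx hp h =>
    ha (mem_image.2 ⟨y, mem_injNbrFinset.2 ⟨hyx, hp⟩, h.symm⟩)
  refine ⟨a, ?_⟩
  rintro u hu v hv huv ⟨p, hup, hvp⟩
  rcases eq_or_ne u x with rfl | hux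
  · simpa [huv.symm] using hfresh v huv.symm ⟨p, hup, hvp⟩
  rcases eq_or_ne v x with rfl | hvx
  · simpa [huv] using (hfresh u huv ⟨p, hvp, hup⟩).symm
  simpa [hux, hvx] using hc (hu.resolve_left hux) (hv.resolve_left hvx) huv ⟨p, hup, hvp⟩

end

/-- (RC4 for `Δ = 5`.)  Suppose `Δ(G) = 5` and every proper subgraph `H` of `G`
satisfies `χᵢ(H) ≤ 7`.  If `G` has a `3`-vertex adjacent to one `2`-vertex and to
two other vertices `u, v` with `d(u) + d(v) ≤ 7`, then `χᵢ(G) ≤ 7`. -/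
theorem rc4_maxDegree_five {V : Type*} [Fintype V] (G : SimpleGraph V)
    [DecidableRel G.Adj] (hΔ : G.maxDegree = 5)
    (hmin : ∀ H : G.Subgraph, H ≠ ⊤ → injChromNum H.coe ≤ 7)
    (h : ∃ w z u v : V, G.degree w = 3 ∧ G.Adj w z ∧ G.Adj w u ∧ G.Adj w v ∧
      z ≠ u ∧ z ≠ v ∧ u ≠ v ∧ G.degree z = 2 ∧ G.degree u + G.degree v ≤ 7) :
    injChromNum G ≤ 7 := by
  classical
  obtain ⟨w, z, u, v, hw, hwz, hwu, hwv, hzu, hzv, huv, hz, hdeg⟩ := h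
  obtain ⟨c, hc⟩ := exists_injColoring_deleteEdges hmin hwz
  have hz_free := card_injNbrFinset_le_of_degree_eq_two hz hwz.symm
  have hw_free := card_injNbrFinset_add_three_le_of_degree_eq_three hw hwz hwu hwv hzu hzv huv
  obtain ⟨a, ha⟩ := hc.isInjColoringOn_deleteEdges.exists_update (x := z) (by omega)
  obtain ⟨b, hb⟩ := ha.exists_update (x := w) (by omega)
  have hcover : insert w (insert z ({w, z}ᶜ : Set V)) = Set.univ := by
    ext
    simp only [Set.mem_insert_iff, Set.mem_compl_iff, Set.mem_singleton_iff, not_or, Set.mem_univ,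
      iff_true]
    tauto
  exact injChromNum_le_of_isInjColoring (hcover ▸ hb).isInjColoring
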